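/- Let Z ∈ ℝ^{M×I} with singular value decomposition Z = UΣV^⊤, where Σ = diag(σ_1, …, σ_R) and R = min{M, I}. For ρ > 0, the singular value thresholding operator D_{1/ρ}(Z) = U [Σ − (1/ρ)I]_+ V^⊤ is the unique minimizer of the function X ↦ ‖X‖_* + (ρ/2)‖X − Z‖_F² over ℝ^{M×I}, where ‖X‖_* denotes the matrix nuclear norm (sum of singular values) and [·]_+ denotes entrywise positive truncation max{·, 0}. -/

import Mathlib

open Matrix

/-- Nuclear norm of a real matrix: the sum of its singular values, i.e. the sum
of the square roots of the eigenvalues of `AᴴA`. -/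
noncomputable def nuclearNorm {M I : ℕ} (A : Matrix (Fin M) (Fin I) ℝ) : ℝ :=
  ∑ i, Real.sqrt ((Matrix.isHermitian_conjTranspose_mul_self A).eigenvalues i)

/-- Squared Frobenius norm of a matrix. -/
def frobSq {a b : ℕ} (A : Matrix (Fin a) (Fin b) ℝ) : ℝ :=
  ∑ i, ∑ j, (A i j) ^ 2

/-! The thresholded matrix `D = U [Σ − ρ⁻¹]₊ Vᵀ` satisfies the optimality condition
`G := ρ (Z − D) ∈ ∂‖D‖_*`. Indeed `G = U diag(d) Vᵀ` with `dᵢ = ρ (σᵢ − [σᵢ − ρ⁻¹]₊) ∈ [0, 1]`,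
so its spectral norm is at most `1` and, by duality of the spectral and nuclear norms,
`⟨G, X⟩ ≤ ‖X‖_*` for all `X`; equality holds at `X = D` because `dᵢ = 1` wherever `D` has a
nonzero singular value. For any `f` with subgradient `ρ (Z − D)` at `D`, the objective
`f + ρ/2 ‖· − Z‖²` exceeds its value at `D` by at least `ρ/2 ‖X − D‖²`, which gives both
minimality and uniqueness. -/

open scoped MatrixOrder Matrix.Norms.L2Operator

section FrobeniusNorm

variable {a b : ℕ}

theorem frobSq_eq_vec_dotProduct_vec (A : Matrix (Fin a) (Fin b) ℝ) :
    frobSq A = vec A ⬝ᵥ vec A := by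
  rw [vec_dotProduct_vec, frobSq, ← Finset.sum_comm]
  simp only [trace, diag, mul_apply, transpose_apply, sq]

theorem frobSq_nonneg (A : Matrix (Fin a) (Fin b) ℝ) : 0 ≤ frobSq A := by
  rw [frobSq_eq_vec_dotProduct_vec]
  exact dotProduct_self_star_nonneg _

theorem frobSq_eq_zero {A : Matrix (Fin a) (Fin b) ℝ} : frobSq A = 0 ↔ A = 0 := by
  rw [frobSq_eq_vec_dotProduct_vec, dotProduct_self_eq_zero, vec_eq_zero_iff]

end FrobeniusNorm

def IsSubgradientAt {m n : Type*} [Fintype m] [Fintype n] (f : Matrix m n ℝ → ℝ)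
    (G D : Matrix m n ℝ) : Prop :=
  ∀ X, f D + (Gᵀ * (X - D)).trace ≤ f X

section Prox

variable {a b : ℕ} {f : Matrix (Fin a) (Fin b) ℝ → ℝ} {ρ : ℝ} {Z D : Matrix (Fin a) (Fin b) ℝ}

theorem IsSubgradientAt.add_frobSq_le (h : IsSubgradientAt f (ρ • (Z - D)) D)
    (X : Matrix (Fin a) (Fin b) ℝ) :
    f D + ρ / 2 * frobSq (D - Z) + ρ / 2 * frobSq (X - D) ≤ f X + ρ / 2 * frobSq (X - Z) := by
  have hX := h X
  rw [← vec_dotProduct_vec] at hX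
  have hXZ : vec (X - Z) = vec (X - D) + vec (D - Z) := by simp only [vec_sub]; abel
  have hG : vec (ρ • (Z - D)) = -ρ • vec (D - Z) := by simp only [vec_smul, vec_sub]; module
  rw [hG, smul_dotProduct, dotProduct_comm] at hX
  simp only [frobSq_eq_vec_dotProduct_vec, hXZ, add_dotProduct, dotProduct_add, smul_eq_mul] at hX ⊢
  rw [dotProduct_comm (vec (D - Z)) (vec (X - D))]
  linarith

theorem IsSubgradientAt.unique_minimizer_add_frobSq (hρ : 0 < ρ)
    (h : IsSubgradientAt f (ρ • (Z - D)) D) :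
    (∀ X, f D + ρ / 2 * frobSq (D - Z) ≤ f X + ρ / 2 * frobSq (X - Z)) ∧
      (∀ X, f X + ρ / 2 * frobSq (X - Z) = f D + ρ / 2 * frobSq (D - Z) → X = D) := by
  have hρ2 : 0 < ρ / 2 := half_pos hρ
  refine ⟨fun X => ?_, fun X hX => ?_⟩
  · nlinarith [h.add_frobSq_le X, frobSq_nonneg (X - D)]
  · have hXD : ρ / 2 * frobSq (X - D) ≤ 0 := by linarith [h.add_frobSq_le X]
    exact sub_eq_zero.mp <| frobSq_eq_zero.mp <|
      le_antisymm (nonpos_of_mul_nonpos_right hXD hρ2) (frobSq_nonneg _)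

end Prox

section OrthonormalColumns

variable {m n r : Type*} [Fintype m] [Fintype n] [Fintype r] [DecidableEq r]

theorem trace_transpose_mul_diagonal_mul_transpose {U : Matrix m r ℝ}
    {V : Matrix n r ℝ} (hU : Uᵀ * U = 1) (hV : Vᵀ * V = 1) (d e : r → ℝ) :
    ((U * diagonal d * Vᵀ)ᵀ * (U * diagonal e * Vᵀ)).trace = ∑ i, d i * e i := by
  have hVDV : (U * diagonal d * Vᵀ)ᵀ * (U * diagonal e * Vᵀ) = V * diagonal (d * e) * Vᵀ := by
    simp only [transpose_mul, transpose_transpose, diagonal_transpose, Matrix.mul_assoc]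
    rw [← Matrix.mul_assoc Uᵀ U, hU, Matrix.one_mul, ← Matrix.mul_assoc (diagonal d),
      diagonal_mul_diagonal]
    rfl
  rw [hVDV, trace_mul_comm, ← Matrix.mul_assoc, hV, Matrix.one_mul, trace_diagonal]
  rfl

theorem l2_opNorm_le_one_of_transpose_mul_self_eq_one {U : Matrix m r ℝ} (hU : Uᵀ * U = 1) :
    ‖U‖ ≤ 1 := by
  have h : ‖U‖ * ‖U‖ ≤ 1 := by
    rw [← l2_opNorm_conjTranspose_mul_self, conjTranspose_eq_transpose_of_trivial, hU,
      ← diagonal_one, l2_opNorm_diagonal]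
    exact (pi_norm_le_iff_of_nonneg zero_le_one).mpr fun _ => by simp
  nlinarith [norm_nonneg U]

theorem l2_opNorm_mul_diagonal_mul_transpose_le_one [DecidableEq n] {U : Matrix m r ℝ} {V : Matrix n r ℝ}
    (hU : Uᵀ * U = 1) (hV : Vᵀ * V = 1) {d : r → ℝ} (hd : ∀ i, |d i| ≤ 1) :
    ‖U * diagonal d * Vᵀ‖ ≤ 1 := by
  have hD : ‖diagonal d‖ ≤ 1 := by
    rw [l2_opNorm_diagonal]
    exact (pi_norm_le_iff_of_nonneg zero_le_one).mpr hd
  have hVt : ‖Vᵀ‖ ≤ 1 := by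
    rw [← conjTranspose_eq_transpose_of_trivial, l2_opNorm_conjTranspose]
    exact l2_opNorm_le_one_of_transpose_mul_self_eq_one hV
  calc ‖U * diagonal d * Vᵀ‖ ≤ ‖U‖ * ‖diagonal d‖ * ‖Vᵀ‖ :=
        (l2_opNorm_mul _ _).trans (mul_le_mul_of_nonneg_right (l2_opNorm_mul _ _) (norm_nonneg _))
    _ ≤ 1 * 1 * 1 := by
        gcongr
        exact l2_opNorm_le_one_of_transpose_mul_self_eq_one hU
    _ = 1 := by norm_num

end OrthonormalColumns

theorem trace_eq_sum_dotProduct_mulVec {n ι : Type*} [Fintype n] [DecidableEq n] [Fintype ι]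
    (A : Matrix n n ℝ) (b : OrthonormalBasis ι ℝ (EuclideanSpace ℝ n)) :
    A.trace = ∑ i, b i ⬝ᵥ (A *ᵥ b i) := by
  have h := LinearMap.trace_eq_sum_inner (toEuclideanLin A) b
  rw [LinearMap.trace_eq_matrix_trace ℝ (EuclideanSpace.basisFun n ℝ).toBasis,
    toEuclideanLin_eq_toLin_orthonormal, LinearMap.toMatrix_toLin] at h
  rw [h]
  refine Finset.sum_congr rfl fun i _ => ?_
  rw [EuclideanSpace.inner_eq_star_dotProduct, dotProduct_comm]
  rfl

theorem dotProduct_transpose_mul_mulVec {m n : Type*} [Fintype m] [Fintype n]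
    (A B : Matrix m n ℝ) (v w : n → ℝ) : v ⬝ᵥ ((Aᵀ * B) *ᵥ w) = (A *ᵥ v) ⬝ᵥ (B *ᵥ w) := by
  rw [← mulVec_mulVec, dotProduct_mulVec, vecMul_transpose]

theorem norm_toLp_mulVec_sq {m n : Type*} [Fintype m] [Fintype n] (A : Matrix m n ℝ) (v : n → ℝ) :
    ‖WithLp.toLp 2 (A *ᵥ v)‖ ^ 2 = v ⬝ᵥ ((Aᵀ * A) *ᵥ v) := by
  rw [dotProduct_transpose_mul_mulVec, ← real_inner_self_eq_norm_sq,
    EuclideanSpace.inner_eq_star_dotProduct]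
  rfl

theorem trace_transpose_mul_le_nuclearNorm {M I : ℕ} {G : Matrix (Fin M) (Fin I) ℝ}
    (hG : ‖G‖ ≤ 1) (X : Matrix (Fin M) (Fin I) ℝ) : (Gᵀ * X).trace ≤ nuclearNorm X := by
  set hXX := isHermitian_conjTranspose_mul_self X
  set b := hXX.eigenvectorBasis
  have hnorm : ∀ j, ‖WithLp.toLp 2 (X *ᵥ b j)‖ = √(hXX.eigenvalues j) := by
    intro j
    rw [← Real.sqrt_sq (norm_nonneg _), norm_toLp_mulVec_sq, hXX.eigenvalues_eq]
    simp [b, conjTranspose_eq_transpose_of_trivial]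
  calc (Gᵀ * X).trace = ∑ j, b j ⬝ᵥ ((Gᵀ * X) *ᵥ b j) := trace_eq_sum_dotProduct_mulVec _ b
    _ = ∑ j, inner ℝ (WithLp.toLp 2 (G *ᵥ b j)) (WithLp.toLp 2 (X *ᵥ b j)) := by
      simp only [dotProduct_transpose_mul_mulVec, EuclideanSpace.inner_eq_star_dotProduct]
      simp [dotProduct_comm]
    _ ≤ ∑ j, ‖WithLp.toLp 2 (X *ᵥ b j)‖ := by
      refine Finset.sum_le_sum fun j _ => (real_inner_le_norm _ _).trans ?_
      have hGb : ‖WithLp.toLp 2 (G *ᵥ b j)‖ ≤ 1 := by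
        simpa [b.orthonormal.1 j] using (l2_opNorm_mulVec G (b j)).trans
          (mul_le_mul_of_nonneg_right hG (norm_nonneg _))
      exact mul_le_of_le_one_left (norm_nonneg _) hGb
    _ = nuclearNorm X := Finset.sum_congr rfl fun j _ => hnorm j

theorem nuclearNorm_eq_trace_sqrt {M I : ℕ} (A : Matrix (Fin M) (Fin I) ℝ) :
    nuclearNorm A = (CFC.sqrt (Aᴴ * A)).trace := by
  have hA := posSemidef_conjTranspose_mul_self A
  rw [CFC.sqrt_eq_cfc, cfc_nnreal_eq_real _ _ hA.nonneg, hA.1.cfc_eq, IsHermitian.cfc,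
    Unitary.conjStarAlgAut_apply, trace_mul_comm, ← Matrix.mul_assoc,
    Unitary.coe_star_mul_self, Matrix.one_mul, trace_diagonal]
  refine Finset.sum_congr rfl fun i _ => ?_
  simp only [Function.comp_apply, Real.coe_sqrt, Real.coe_toNNReal', RCLike.ofReal_real_eq_id,
    id_eq, max_eq_left (hA.eigenvalues_nonneg i)]

theorem nuclearNorm_mul_diagonal_mul_transpose {M I R : ℕ} {U : Matrix (Fin M) (Fin R) ℝ}
    {V : Matrix (Fin I) (Fin R) ℝ} (hU : Uᵀ * U = 1) (hV : Vᵀ * V = 1) {τ : Fin R → ℝ}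
    (hτ : 0 ≤ τ) : nuclearNorm (U * diagonal τ * Vᵀ) = ∑ i, τ i := by
  set B := V * diagonal τ * Vᵀ
  have hB : B.PosSemidef := by
    simpa [conjTranspose_eq_transpose_of_trivial] using
      (posSemidef_diagonal_iff.mpr hτ).mul_mul_conjTranspose_same V
  have hB2 : (U * diagonal τ * Vᵀ)ᴴ * (U * diagonal τ * Vᵀ) = B ^ 2 := by
    simp only [conjTranspose_eq_transpose_of_trivial, transpose_mul, transpose_transpose,
      diagonal_transpose, sq, B, Matrix.mul_assoc]
    rw [← Matrix.mul_assoc Vᵀ V, hV, Matrix.one_mul, ← Matrix.mul_assoc Uᵀ U, hU, Matrix.one_mul]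
  rw [nuclearNorm_eq_trace_sqrt, hB2, CFC.sqrt_sq B hB.nonneg, trace_mul_comm, ← Matrix.mul_assoc,
    hV, Matrix.one_mul, trace_diagonal]

theorem isSubgradientAt_nuclearNorm {M I R : ℕ} {U : Matrix (Fin M) (Fin R) ℝ}
    {V : Matrix (Fin I) (Fin R) ℝ} (hU : Uᵀ * U = 1) (hV : Vᵀ * V = 1) {τ d : Fin R → ℝ}
    (hτ : 0 ≤ τ) (hd : ∀ i, |d i| ≤ 1) (hdτ : ∀ i, d i * τ i = τ i) :
    IsSubgradientAt nuclearNorm (U * diagonal d * Vᵀ) (U * diagonal τ * Vᵀ) := by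
  intro X
  have hGD := trace_transpose_mul_diagonal_mul_transpose hU hV d τ
  simp only [hdτ] at hGD
  rw [Matrix.mul_sub, trace_sub, hGD, nuclearNorm_mul_diagonal_mul_transpose hU hV hτ,
    add_sub_cancel]
  exact trace_transpose_mul_le_nuclearNorm (l2_opNorm_mul_diagonal_mul_transpose_le_one hU hV hd) X

theorem abs_mul_sub_max_sub_inv_le_one {ρ s : ℝ} (hρ : 0 < ρ) (hs : 0 ≤ s) :
    |ρ * (s - max (s - 1 / ρ) 0)| ≤ 1 := by
  have h1 : ρ * (1 / ρ) = 1 := mul_one_div_cancel hρ.ne'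
  rw [abs_le]
  constructor <;> cases max_cases (s - 1 / ρ) 0 <;> nlinarith

theorem mul_sub_max_sub_inv_mul_self {ρ s : ℝ} (hρ : 0 < ρ) :
    ρ * (s - max (s - 1 / ρ) 0) * max (s - 1 / ρ) 0 = max (s - 1 / ρ) 0 := by
  rcases max_cases (s - 1 / ρ) 0 with ⟨h, -⟩ | ⟨h, -⟩
  · rw [h, sub_sub_cancel, mul_one_div_cancel hρ.ne', one_mul]
  · rw [h, mul_zero]

theorem svt_unique_minimizer_general {M I R : ℕ} (ρ : ℝ) (hρ : 0 < ρ)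
    (U : Matrix (Fin M) (Fin R) ℝ) (V : Matrix (Fin I) (Fin R) ℝ) (σ : Fin R → ℝ)
    (hU : Uᵀ * U = 1) (hV : Vᵀ * V = 1) (hσ : ∀ i, 0 ≤ σ i)
    (Z : Matrix (Fin M) (Fin I) ℝ) (hZ : Z = U * Matrix.diagonal σ * Vᵀ) :
    (∀ X : Matrix (Fin M) (Fin I) ℝ,
        nuclearNorm (U * Matrix.diagonal (fun i => max (σ i - 1 / ρ) 0) * Vᵀ) +
          (ρ / 2) * frobSq (U * Matrix.diagonal (fun i => max (σ i - 1 / ρ) 0) * Vᵀ - Z) ≤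
        nuclearNorm X + (ρ / 2) * frobSq (X - Z)) ∧
      (∀ X : Matrix (Fin M) (Fin I) ℝ,
        nuclearNorm X + (ρ / 2) * frobSq (X - Z) =
          nuclearNorm (U * Matrix.diagonal (fun i => max (σ i - 1 / ρ) 0) * Vᵀ) +
            (ρ / 2) * frobSq (U * Matrix.diagonal (fun i => max (σ i - 1 / ρ) 0) * Vᵀ - Z) →
        X = U * Matrix.diagonal (fun i => max (σ i - 1 / ρ) 0) * Vᵀ) := by
  set τ : Fin R → ℝ := fun i => max (σ i - 1 / ρ) 0
  have hG : ρ • (Z - U * diagonal τ * Vᵀ) = U * diagonal (fun i => ρ * (σ i - τ i)) * Vᵀ := by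
    rw [hZ, ← Matrix.sub_mul, ← Matrix.mul_sub, diagonal_sub, ← Matrix.smul_mul,
      ← Matrix.mul_smul, ← diagonal_smul]
    rfl
  have hsub : IsSubgradientAt nuclearNorm (ρ • (Z - U * diagonal τ * Vᵀ)) (U * diagonal τ * Vᵀ) :=
    hG ▸ isSubgradientAt_nuclearNorm hU hV (fun i => le_max_right _ _)
      (fun i => abs_mul_sub_max_sub_inv_le_one hρ (hσ i)) (fun i => mul_sub_max_sub_inv_mul_self hρ)
  exact hsub.unique_minimizer_add_frobSq hρ

/-- Singular value thresholding `D_{1/ρ}(Z) = U[Σ − (1/ρ)I]₊Vᵀ` is the unique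
minimizer of `X ↦ ‖X‖_* + (ρ/2)‖X − Z‖_F²`. -/
theorem svt_unique_minimizer {M I R : ℕ} (hR : R = min M I) (ρ : ℝ) (hρ : 0 < ρ)
    (U : Matrix (Fin M) (Fin R) ℝ) (V : Matrix (Fin I) (Fin R) ℝ) (σ : Fin R → ℝ)
    (hU : Uᵀ * U = 1) (hV : Vᵀ * V = 1) (hσ : ∀ i, 0 ≤ σ i)
    (Z : Matrix (Fin M) (Fin I) ℝ) (hZ : Z = U * Matrix.diagonal σ * Vᵀ) :
    (∀ X : Matrix (Fin M) (Fin I) ℝ,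
        nuclearNorm (U * Matrix.diagonal (fun i => max (σ i - 1 / ρ) 0) * Vᵀ) +
          (ρ / 2) * frobSq (U * Matrix.diagonal (fun i => max (σ i - 1 / ρ) 0) * Vᵀ - Z) ≤
        nuclearNorm X + (ρ / 2) * frobSq (X - Z)) ∧
      (∀ X : Matrix (Fin M) (Fin I) ℝ,
        nuclearNorm X + (ρ / 2) * frobSq (X - Z) =
          nuclearNorm (U * Matrix.diagonal (fun i => max (σ i - 1 / ρ) 0) * Vᵀ) +
            (ρ / 2) * frobSq (U * Matrix.diagonal (fun i => max (σ i - 1 / ρ) 0) * Vᵀ - Z) →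
        X = U * Matrix.diagonal (fun i => max (σ i - 1 / ρ) 0) * Vᵀ) :=
  svt_unique_minimizer_general ρ hρ U V σ hU hV hσ Z hZ
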